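/- If a structure category Δ contains a function with an empty fiber (i.e., 0 is among the fiber cardinalities of morphisms of Δ) and also contains a function that is not strictly increasing and not injective, then Δ contains all functions between finite ordinals. -/

import Mathlib

/-- The element of `Fin (∑ i, k i)` determined by block `p.1` and offset `p.2`. -/
def sigmaToFin {n : ℕ} {k : Fin n → ℕ} (p : (i : Fin n) × Fin (k i)) : Fin (∑ i, k i) :=
  ⟨(∑ j ∈ Finset.univ.filter fun j => j < p.1, k j) + p.2.val, by
    have hsub := Finset.sum_le_sum_of_subset (f := k)
      (Finset.subset_univ (insert p.1 (Finset.univ.filter fun j => j < p.1)))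
    rw [Finset.sum_insert (by simp)] at hsub
    have := p.2.isLt
    omega⟩

/-- Decomposition of an element of `Fin (∑ i, k i)` into a block index and an offset. -/
def finToSigma {n : ℕ} {k : Fin n → ℕ} (p : Fin (∑ i, k i)) : (i : Fin n) × Fin (k i) :=
  (List.ofFn fun i => List.ofFn fun x : Fin (k i) =>
    (⟨i, x⟩ : (i : Fin n) × Fin (k i))).flatten.get (Fin.cast (by simp [Function.comp_def, List.sum_ofFn]) p)

/-- Coproduct of two functions between finite ordinals, acting blockwise. -/
def coprodMap {m₁ n₁ m₂ n₂ : ℕ} (f : Fin m₁ → Fin n₁) (g : Fin m₂ → Fin n₂) :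
    Fin (m₁ + m₂) → Fin (n₁ + n₂) :=
  finSumFinEquiv ∘ Sum.map f g ∘ finSumFinEquiv.symm

/-- The similarity component `θ'_{k₁,…,kₙ}` of `θ : [m] → [n]`. -/
def simComp {m n : ℕ} (θ : Fin m → Fin n) (k : Fin n → ℕ) :
    Fin (∑ i, k (θ i)) → Fin (∑ j, k j) :=
  fun p => sigmaToFin ⟨θ (finToSigma p).1, (finToSigma p).2⟩

/-- Cardinality of the fiber of `f` over `i`. -/
def fiberCard {m n : ℕ} (f : Fin m → Fin n) (i : Fin n) : ℕ :=
  (Finset.univ.filter fun x => f x = i).card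

/-- A structure category: a wide subcategory of `FinOrd` closed under coproducts of
morphisms and under similarity components. -/
structure IsStructCat (Δ : ∀ m n : ℕ, Set (Fin m → Fin n)) : Prop where
  id_mem : ∀ n, id ∈ Δ n n
  comp_mem : ∀ {k m n : ℕ} (f : Fin k → Fin m) (g : Fin m → Fin n),
    f ∈ Δ k m → g ∈ Δ m n → g ∘ f ∈ Δ k n
  coprod_mem : ∀ {m₁ n₁ m₂ n₂ : ℕ} (f : Fin m₁ → Fin n₁) (g : Fin m₂ → Fin n₂),
    f ∈ Δ m₁ n₁ → g ∈ Δ m₂ n₂ → coprodMap f g ∈ Δ (m₁ + m₂) (n₁ + n₂)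
  sim_mem : ∀ {m n : ℕ} (θ : Fin m → Fin n), θ ∈ Δ m n → ∀ k : Fin n → ℕ,
    simComp θ k ∈ Δ (∑ i, k (θ i)) (∑ j, k j)

/-- A structure monoid: a subset of ℕ containing 1 and closed under `I`-indexed sums. -/
def IsStructMonoid (I : Set ℕ) : Prop :=
  1 ∈ I ∧ ∀ k ∈ I, ∀ a : Fin k → ℕ, (∀ i, a i ∈ I) → (∑ i, a i) ∈ I

/-- `Δ^I` : functions all of whose fibers have cardinality in `I`. -/
def DeltaUp (I : Set ℕ) : ∀ m n : ℕ, Set (Fin m → Fin n) :=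
  fun _ _ => {f | ∀ i, fiberCard f i ∈ I}

/-- The unique map `[n] → [1]`. -/
def bang (n : ℕ) : Fin n → Fin 1 := fun _ => 0

/-- `Δ_I` : the smallest structure category containing the maps `[n] → [1]` for `n ∈ I`. -/
def GenDelta (I : Set ℕ) : ∀ m n : ℕ, Set (Fin m → Fin n) := fun m n =>
  {f | ∀ Δ : ∀ m n : ℕ, Set (Fin m → Fin n), IsStructCat Δ →
    (∀ k ∈ I, bang k ∈ Δ k 1) → f ∈ Δ m n}

lemma shift_prefix {n : ℕ} (k : Fin (n+1) → ℕ) (b : Fin n) :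
    (∑ j ∈ Finset.univ.filter fun j => j < Fin.succ b, k j)
      = k 0 + ∑ j ∈ Finset.univ.filter (fun j => j < b), k (Fin.succ j) := by
  rw [Finset.sum_filter, Finset.sum_filter, Fin.sum_univ_succ]
  simp [Fin.succ_lt_succ_iff, Fin.succ_pos]

lemma finToSigma_eq_getElem {n : ℕ} {k : Fin n → ℕ} (j : ℕ) (hj' : j < ∑ i, k i)
    (hj : j < ((List.ofFn fun i => List.ofFn fun x : Fin (k i) =>
      (⟨i, x⟩ : (i : Fin n) × Fin (k i))).flatten).length) :
    ((List.ofFn fun i => List.ofFn fun x : Fin (k i) =>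
      (⟨i, x⟩ : (i : Fin n) × Fin (k i))).flatten)[j]'hj = finToSigma ⟨j, hj'⟩ := by
  unfold finToSigma
  rw [List.get_eq_getElem]
  rfl

lemma sigmaToFin_finToSigma : ∀ {n : ℕ} {k : Fin n → ℕ} (p : Fin (∑ i, k i)),
    sigmaToFin (finToSigma p) = p := by
  intro n
  induction n with
  | zero => intro k p; exact absurd p.isLt (by simp)
  | succ n ih =>
    intro k p
    have hsum : ∑ i, k i = k 0 + ∑ i : Fin n, k i.succ := Fin.sum_univ_succ k
    have hp := p.isLt
    unfold finToSigma
    rw [List.get_eq_getElem]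
    rw [List.getElem_of_eq (by rw [List.ofFn_succ, List.flatten_cons])]
    by_cases h : (p : ℕ) < k 0
    · rw [List.getElem_append_left (by simpa using h)]
      rw [List.getElem_ofFn]
      apply Fin.ext
      show (∑ j ∈ Finset.univ.filter fun j => j < (0 : Fin (n+1)), k j) + _ = _
      have : (Finset.univ.filter fun j : Fin (n+1) => j < 0) = ∅ := by
        simp [Finset.filter_eq_empty_iff]
      rw [this]
      simp
    · push_neg at h
      rw [List.getElem_append_right (by simpa using h)]
      have hmap : (List.ofFn fun i : Fin n => List.ofFn fun x : Fin (k i.succ) =>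
            (⟨i.succ, x⟩ : (i : Fin (n+1)) × Fin (k i))).flatten
          = ((List.ofFn fun i : Fin n => List.ofFn fun x : Fin (k i.succ) =>
            (⟨i, x⟩ : (i : Fin n) × Fin (k i.succ))).flatten).map
              (fun q => (⟨q.1.succ, q.2⟩ : (i : Fin (n+1)) × Fin (k i))) := by
        rw [List.map_flatten, List.map_ofFn]
        refine congrArg List.flatten (congrArg List.ofFn ?_)
        funext i
        rw [Function.comp_apply, List.map_ofFn]
        rfl
      rw [List.getElem_of_eq hmap, List.getElem_map]
      have hplt : (p:ℕ) - k 0 < ∑ i : Fin n, k i.succ := by omega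
      have hlen : (List.ofFn fun x : Fin (k 0) =>
          ((⟨0, x⟩ : (i : Fin (n+1)) × Fin (k i)))).length = k 0 := List.length_ofFn
      have hj' : (p:ℕ) - (List.ofFn fun x : Fin (k 0) =>
          ((⟨0, x⟩ : (i : Fin (n+1)) × Fin (k i)))).length < ∑ i : Fin n, k i.succ := by
        rw [hlen]; omega
      simp only [Fin.coe_cast]
      rw [finToSigma_eq_getElem (k := fun i : Fin n => k i.succ) _ hj']
      set q := finToSigma (⟨_, hj'⟩ : Fin (∑ i : Fin n, k i.succ)) with hq
      have key := ih (⟨_, hj'⟩ : Fin (∑ i : Fin n, k i.succ))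
      rw [← hq] at key
      have kv : (∑ j ∈ Finset.univ.filter fun j => j < q.1, k (Fin.succ j)) + q.2.val
          = (p:ℕ) - (List.ofFn fun x : Fin (k 0) =>
          ((⟨0, x⟩ : (i : Fin (n+1)) × Fin (k i)))).length := congrArg Fin.val key
      apply Fin.ext
      show (∑ j ∈ Finset.univ.filter fun j => j < Fin.succ q.1, k j) + q.2.val = (p:ℕ)
      rw [shift_prefix]
      omega


lemma eq_of_to_one {c : ℕ} (F G : Fin c → Fin 1) : F = G :=
  funext fun _ => Subsingleton.elim _ _

lemma card_filter_lt {N : ℕ} (b : Fin N) :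
    (Finset.univ.filter fun j => j < b).card = (b : ℕ) := by
  have : (Finset.univ.filter fun j => j < b) = Finset.Iio b := by ext j; simp
  rw [this, Fin.card_Iio]

lemma mem_cast {Δ : ∀ m n : ℕ, Set (Fin m → Fin n)} {m n m' n' : ℕ}
    (h1 : m = m') (h2 : n = n') {f : Fin m → Fin n} (hf : f ∈ Δ m n) :
    (Fin.cast h2 ∘ f ∘ Fin.cast h1.symm) ∈ Δ m' n' := by
  subst h1; subst h2
  simpa [Fin.cast_refl, Function.comp] using hf

lemma coprodMap_val {m₁ n₁ m₂ n₂ : ℕ} (f : Fin m₁ → Fin n₁) (g : Fin m₂ → Fin n₂)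
    (x : Fin (m₁ + m₂)) :
    (coprodMap f g x : ℕ) = if h : (x : ℕ) < m₁ then (f ⟨x, h⟩ : ℕ)
      else n₁ + (g ⟨(x : ℕ) - m₁, by omega⟩ : ℕ) := by
  rcases hsx : finSumFinEquiv.symm x with u | u
  · have hxu : x = Fin.castAdd m₂ u := by
      have := congrArg finSumFinEquiv hsx
      rwa [Equiv.apply_symm_apply, finSumFinEquiv_apply_left] at this
    have hxv : (x : ℕ) = (u : ℕ) := by rw [hxu]; rfl
    have hlt : (x : ℕ) < m₁ := by rw [hxv]; exact u.isLt
    rw [dif_pos hlt]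
    have he : (⟨(x : ℕ), hlt⟩ : Fin m₁) = u := Fin.ext hxv
    rw [he]
    show (finSumFinEquiv (Sum.map f g (finSumFinEquiv.symm x)) : ℕ) = _
    rw [hsx]
    simp
  · have hxu : x = Fin.natAdd m₁ u := by
      have := congrArg finSumFinEquiv hsx
      rwa [Equiv.apply_symm_apply, finSumFinEquiv_apply_right] at this
    have hxv : (x : ℕ) = m₁ + (u : ℕ) := by rw [hxu]; rfl
    rw [dif_neg (by omega)]
    have he : (⟨(x : ℕ) - m₁, by omega⟩ : Fin m₂) = u := Fin.ext (by simp only [Fin.val_mk]; omega)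
    rw [he]
    show (finSumFinEquiv (Sum.map f g (finSumFinEquiv.symm x)) : ℕ) = _
    rw [hsx]
    simp

section StructCat

variable {Δ : ∀ m n : ℕ, Set (Fin m → Fin n)} (hΔ : IsStructCat Δ)
include hΔ

lemma bang_fiber_mem {m n : ℕ} {f : Fin m → Fin n} (hf : f ∈ Δ m n) (i : Fin n)
    (G : Fin (fiberCard f i) → Fin 1) : G ∈ Δ (fiberCard f i) 1 := by
  classical
  set k : Fin n → ℕ := fun j => if j = i then 1 else 0 with hk
  have hs := hΔ.sim_mem f hf k
  have h1 : (∑ x : Fin m, k (f x)) = fiberCard f i := by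
    rw [fiberCard, Finset.card_filter]
  have h2 : (∑ j, k j) = 1 := by
    rw [hk]
    rw [Finset.sum_ite_eq' Finset.univ i (fun _ => 1)]
    simp
  have hmem := mem_cast h1 h2 hs
  rw [eq_of_to_one G (Fin.cast h2 ∘ simComp f k ∘ Fin.cast h1.symm)]
  exact hmem

lemma empty_one_mem
    (h0 : ∃ (m n : ℕ) (f : Fin m → Fin n) (i : Fin n), f ∈ Δ m n ∧ fiberCard f i = 0) :
    ∀ G : Fin 0 → Fin 1, G ∈ Δ 0 1 := by
  obtain ⟨m, n, f, i, hf, hfi⟩ := h0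
  have H := fun G => bang_fiber_mem hΔ hf i G
  rw [hfi] at H
  exact H

lemma empty_mem
    (h0 : ∃ (m n : ℕ) (f : Fin m → Fin n) (i : Fin n), f ∈ Δ m n ∧ fiberCard f i = 0) :
    ∀ (n : ℕ) (G : Fin 0 → Fin n), G ∈ Δ 0 n := by
  intro n
  induction n with
  | zero =>
    intro G
    have : G = id := funext fun x => x.elim0
    rw [this]; exact hΔ.id_mem 0
  | succ n ihn =>
    intro G
    have h := hΔ.coprod_mem (fun x : Fin 0 => x.elim0) (fun x : Fin 0 => x.elim0)
      (ihn _) (empty_one_mem hΔ h0 _)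
    have hG : G = coprodMap (fun x : Fin 0 => x.elim0) (fun x : Fin 0 => x.elim0 : Fin 0 → Fin 1) :=
      funext fun x => x.elim0
    rw [hG]
    exact h

lemma two_one_mem
    (h0 : ∃ (m n : ℕ) (f : Fin m → Fin n) (i : Fin n), f ∈ Δ m n ∧ fiberCard f i = 0)
    (hg : ∃ (m n : ℕ) (g : Fin m → Fin n), g ∈ Δ m n ∧ ¬ StrictMono g ∧ ¬ Function.Injective g) :
    ∀ G : Fin 2 → Fin 1, G ∈ Δ 2 1 := by
  classical
  obtain ⟨m, n, g, hgmem, -, hginj⟩ := hg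
  rw [Function.not_injective_iff] at hginj
  obtain ⟨a, b, heq, hab⟩ := hginj
  have hc : 2 ≤ fiberCard g (g a) := by
    have hsub : ({a, b} : Finset (Fin m)) ⊆ Finset.univ.filter fun x => g x = g a := by
      intro x hx
      simp only [Finset.mem_insert, Finset.mem_singleton] at hx
      rcases hx with rfl | rfl <;> simp [heq]
    have := Finset.card_le_card hsub
    rwa [Finset.card_pair hab] at this
  have hFc := bang_fiber_mem hΔ hgmem (g a)
  have hJ0 := hΔ.coprod_mem (id : Fin 2 → Fin 2) (fun x : Fin 0 => x.elim0)
    (hΔ.id_mem 2) (empty_mem hΔ h0 (fiberCard g (g a) - 2) _)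
  have hJ := mem_cast (rfl : 2 + 0 = 2) (by omega : 2 + (fiberCard g (g a) - 2) = fiberCard g (g a)) hJ0
  intro G
  have hcomp := hΔ.comp_mem _ _ hJ (hFc (fun _ => 0))
  rw [eq_of_to_one G _]
  exact hcomp

lemma to_one_mem
    (h0 : ∃ (m n : ℕ) (f : Fin m → Fin n) (i : Fin n), f ∈ Δ m n ∧ fiberCard f i = 0)
    (hg : ∃ (m n : ℕ) (g : Fin m → Fin n), g ∈ Δ m n ∧ ¬ StrictMono g ∧ ¬ Function.Injective g) :
    ∀ (m : ℕ) (G : Fin m → Fin 1), G ∈ Δ m 1 := by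
  intro m
  induction m with
  | zero => exact empty_one_mem hΔ h0
  | succ m ihm =>
    intro G
    have h := hΔ.coprod_mem (fun _ : Fin m => (0 : Fin 1)) (id : Fin 1 → Fin 1)
      (ihm _) (hΔ.id_mem 1)
    have h2 := hΔ.comp_mem _ _ h (two_one_mem hΔ h0 hg (fun _ => 0))
    rw [eq_of_to_one G _]
    exact h2

lemma point_mem
    (h0 : ∃ (m n : ℕ) (f : Fin m → Fin n) (i : Fin n), f ∈ Δ m n ∧ fiberCard f i = 0) :
    ∀ (n : ℕ) (G : Fin 1 → Fin n), G ∈ Δ 1 n := by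
  intro n G
  set i := G 0 with hi
  have hilt : (i : ℕ) < n := i.isLt
  have hin := hΔ.coprod_mem (id : Fin 1 → Fin 1) (fun x : Fin 0 => x.elim0)
    (hΔ.id_mem 1) (empty_mem hΔ h0 (n - (i : ℕ) - 1) _)
  have hout := hΔ.coprod_mem (fun x : Fin 0 => x.elim0 : Fin 0 → Fin (i : ℕ)) _
    (empty_mem hΔ h0 (i : ℕ) _) hin
  have hmem := mem_cast (rfl : 0 + (1 + 0) = 1)
    (by omega : (i : ℕ) + (1 + (n - (i : ℕ) - 1)) = n) hout
  have hG : G = Fin.cast (by omega : (i : ℕ) + (1 + (n - (i : ℕ) - 1)) = n) ∘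
      (coprodMap (fun x : Fin 0 => x.elim0)
        (coprodMap (id : Fin 1 → Fin 1) (fun x : Fin 0 => x.elim0))) ∘
      Fin.cast (rfl : 0 + (1 + 0) = 1).symm := by
    funext x
    have hx : x = 0 := Subsingleton.elim _ _
    subst hx
    apply Fin.ext
    show (i : ℕ) = _
    simp only [Function.comp_apply, Fin.coe_cast]
    rw [coprodMap_val]
    rw [dif_neg (by simp)]
    rw [coprodMap_val]
    rw [dif_pos (by simp)]
    simp
  rw [hG]
  exact hmem

lemma fold_mem
    (h0 : ∃ (m n : ℕ) (f : Fin m → Fin n) (i : Fin n), f ∈ Δ m n ∧ fiberCard f i = 0)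
    (hg : ∃ (m n : ℕ) (g : Fin m → Fin n), g ∈ Δ m n ∧ ¬ StrictMono g ∧ ¬ Function.Injective g)
    (n : ℕ) :
    ∃ F : Fin (n + n) → Fin n, F ∈ Δ (n + n) n ∧
      ∀ y : Fin (n + n), (F y : ℕ) = if (y : ℕ) < n then (y : ℕ) else (y : ℕ) - n := by
  classical
  set θ : Fin 2 → Fin 1 := fun _ => 0 with hθ
  set k : Fin 1 → ℕ := fun _ => n with hk
  have hs := hΔ.sim_mem θ (two_one_mem hΔ h0 hg θ) k
  have hA : (∑ i : Fin 2, k (θ i)) = n + n := Fin.sum_univ_two _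
  have hB : (∑ j : Fin 1, k j) = n := Fin.sum_univ_one _
  refine ⟨Fin.cast hB ∘ simComp θ k ∘ Fin.cast hA.symm, mem_cast hA hB hs, ?_⟩
  intro y
  set z : Fin (∑ i : Fin 2, k (θ i)) := Fin.cast hA.symm y with hz
  set q := finToSigma z with hq
  have key := sigmaToFin_finToSigma z
  rw [← hq] at key
  have kv := congrArg Fin.val key
  have kv2 : (Finset.univ.filter fun j => j < q.1).card • n + (q.2 : ℕ) = (y : ℕ) := by
    rw [← Finset.sum_const]
    exact kv
  rw [card_filter_lt] at kv2
  have ho : (q.2 : ℕ) < n := q.2.isLt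
  have hq1 : (q.1 : ℕ) = 0 ∨ (q.1 : ℕ) = 1 := by omega
  have hval : ((Fin.cast hB ∘ simComp θ k ∘ Fin.cast hA.symm) y : ℕ) = (q.2 : ℕ) := by
    simp only [Function.comp_apply, Fin.coe_cast, ← hz]
    show (sigmaToFin ⟨θ q.1, q.2⟩ : ℕ) = _
    show (∑ j ∈ Finset.univ.filter fun j => j < θ q.1, k j) + (q.2 : ℕ) = _
    have hempty : (Finset.univ.filter fun j : Fin 1 => j < θ q.1) = ∅ := by
      apply Finset.filter_eq_empty_iff.mpr
      intro j _
      rw [Fin.lt_def]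
      have h1 := j.isLt
      have h2 := (θ q.1).isLt
      omega
    rw [hempty, Finset.sum_empty]
    exact Nat.zero_add _
  rw [hval]
  rw [smul_eq_mul] at kv2
  rcases hq1 with h | h <;> rw [h] at kv2 <;> split_ifs <;> omega

end StructCat

/-- If a structure category contains a function with an empty fiber and a function that is
neither strictly increasing nor injective, then it contains all functions. -/
theorem stmt_9 (Δ : ∀ m n : ℕ, Set (Fin m → Fin n)) (hΔ : IsStructCat Δ)
    (h0 : ∃ (m n : ℕ) (f : Fin m → Fin n) (i : Fin n), f ∈ Δ m n ∧ fiberCard f i = 0)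
    (hg : ∃ (m n : ℕ) (g : Fin m → Fin n), g ∈ Δ m n ∧ ¬ StrictMono g ∧ ¬ Function.Injective g) :
    ∀ (m n : ℕ) (f : Fin m → Fin n), f ∈ Δ m n := by
  intro m
  induction m with
  | zero => intro n f; exact empty_mem hΔ h0 n f
  | succ m ihm =>
    intro n f
    obtain ⟨F, hF, hFval⟩ := fold_mem hΔ h0 hg n
    have hcop := hΔ.coprod_mem (fun x : Fin m => f x.castSucc) (fun _ : Fin 1 => f (Fin.last m))
      (ihm n _) (point_mem hΔ h0 n _)
    have hcomp := hΔ.comp_mem _ _ hcop hF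
    have hf : f = F ∘ coprodMap (fun x : Fin m => f x.castSucc) (fun _ : Fin 1 => f (Fin.last m)) := by
      funext x
      apply Fin.ext
      show (f x : ℕ) = (F _ : ℕ)
      rw [hFval, coprodMap_val]
      rcases lt_or_ge (x : ℕ) m with h | h
      · rw [dif_pos h]
        have hlt := (f (Fin.castSucc ⟨(x : ℕ), h⟩)).isLt
        have hx : Fin.castSucc ⟨(x : ℕ), h⟩ = x := by apply Fin.ext; rfl
        rw [hx] at hlt ⊢
        rw [if_pos hlt]
      · rw [dif_neg (by omega)]
        have hlast := (f (Fin.last m)).isLt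
        have hx : x = Fin.last m := by apply Fin.ext; have := x.isLt; simp [Fin.last]; omega
        rw [if_neg (by omega)]
        rw [hx]
        omega
    rw [hf]
    exact hcomp
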